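/- Let ψ ∈ ℂ^{2^n} be a unit vector and i ∈ [n]. If there exists P ∈ stab(ψ) that acts non-trivially on qubit i (i.e. P = i^ℓ·Q_1⊗⋯⊗Q_n with Q_i ≠ I), then ⟨ψ, ((I − H_i)/2) ψ⟩ ≥ sin²(π/8). -/

import Mathlib

open Matrix

noncomputable section

/-- The space of `n`-qubit operators (2^n × 2^n complex matrices, indexed by bit strings). -/
abbrev QMat (n : ℕ) := Matrix (Fin n → Fin 2) (Fin n → Fin 2) ℂ

/-- The space of `n`-qubit state vectors (ℂ^{2^n}, indexed by bit strings). -/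
abbrev QVec (n : ℕ) := (Fin n → Fin 2) → ℂ

def PauliX : Matrix (Fin 2) (Fin 2) ℂ := !![0, 1; 1, 0]
def PauliY : Matrix (Fin 2) (Fin 2) ℂ := !![0, -Complex.I; Complex.I, 0]
def PauliZ : Matrix (Fin 2) (Fin 2) ℂ := !![1, 0; 0, -1]

/-- `Q` is one of the four single-qubit Pauli matrices `I, X, Y, Z`. -/
def IsSingleQubitPauli (Q : Matrix (Fin 2) (Fin 2) ℂ) : Prop :=
  Q = 1 ∨ Q = PauliX ∨ Q = PauliY ∨ Q = PauliZ

/-- Kronecker product, in qubit order, of `n` single-qubit operators. -/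
def tensorn (n : ℕ) (Q : Fin n → Matrix (Fin 2) (Fin 2) ℂ) : QMat n :=
  fun x y => ∏ j, Q j (x j) (y j)

/-- `P` is an element of the `n`-qubit Pauli group: `P = i^ℓ · Q_1 ⊗ ⋯ ⊗ Q_n`. -/
def IsPauli {n : ℕ} (P : QMat n) : Prop :=
  ∃ (ℓ : Fin 4) (Q : Fin n → Matrix (Fin 2) (Fin 2) ℂ),
    (∀ j, IsSingleQubitPauli (Q j)) ∧ P = (Complex.I ^ (ℓ : ℕ)) • tensorn n Q

/-- The Hadamard matrix `H = (1/√2)[[1,1],[1,-1]]`. -/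
def Had2 : Matrix (Fin 2) (Fin 2) ℂ := ((Real.sqrt 2 : ℂ))⁻¹ • !![1, 1; 1, -1]

/-- The Hadamard gate applied to qubit `i`: `H_i = I^{⊗(i-1)} ⊗ H ⊗ I^{⊗(n-i)}`. -/
def HadAt (n : ℕ) (i : Fin n) : QMat n := tensorn n (fun j => if j = i then Had2 else 1)

/-!
Let `P = c · Q₁ ⊗ ⋯ ⊗ Qₙ` stabilize `ψ`. Since `Pψ = ψ`, conjugating an operator by `P` does not
change its expectation value in `ψ`; as the `Qⱼ` are Hermitian involutions, conjugating an
operator `A_i` that acts on qubit `i` alone by `P` is the same as conjugating `A` by `Qᵢ`. Hence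
`⟪ψ, H_i ψ⟫` equals the expectation of `(H + Qᵢ H Qᵢ) / 2`, which is `X / √2`, `0` or `Z / √2` for
`Qᵢ = X, Y, Z`. A unitary has expectation of real part at most `1`, so `Re ⟪ψ, H_i ψ⟫ ≤ 1 / √2`
and `⟪ψ, (I - H_i) / 2 ψ⟫ ≥ (1 - 1 / √2) / 2 = sin²(π / 8)`.
-/

lemma dotProduct_conjTranspose_mul_mul_mulVec_of_mulVec_eq {m R : Type*} [Fintype m]
    [CommSemiring R] [StarRing R] {P : Matrix m m R} {ψ : m → R} (hψ : P *ᵥ ψ = ψ)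
    (M : Matrix m m R) :
    star ψ ⬝ᵥ ((Pᴴ * M * P) *ᵥ ψ) = star ψ ⬝ᵥ (M *ᵥ ψ) := by
  rw [← mulVec_mulVec, hψ, ← mulVec_mulVec, dotProduct_mulVec, ← star_mulVec, hψ]

open scoped ComplexOrder in
lemma re_dotProduct_mulVec_le_one {m 𝕜 : Type*} [Fintype m] [DecidableEq m] [RCLike 𝕜]
    {U : Matrix m m 𝕜} (hU : Uᴴ * U = 1) {ψ : m → 𝕜} (hψ : star ψ ⬝ᵥ ψ = 1) :
    RCLike.re (star ψ ⬝ᵥ (U *ᵥ ψ)) ≤ 1 := by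
  have hUψ : star (U *ᵥ ψ) ⬝ᵥ (U *ᵥ ψ) = 1 := by
    rw [star_mulVec, ← dotProduct_mulVec, mulVec_mulVec, hU, one_mulVec, hψ]
  have hswap : star (U *ᵥ ψ) ⬝ᵥ ψ = star (star ψ ⬝ᵥ (U *ᵥ ψ)) := by
    rw [star_dotProduct, dotProduct_comm]
  -- `‖ψ - Uψ‖² = 2 - 2 Re ⟪ψ, Uψ⟫`
  have hdist : 0 ≤ star (ψ - U *ᵥ ψ) ⬝ᵥ (ψ - U *ᵥ ψ) := dotProduct_star_self_nonneg _
  rw [star_sub, sub_dotProduct, dotProduct_sub, dotProduct_sub, hψ, hUψ, hswap] at hdist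
  have hre := RCLike.re_le_re hdist
  simp only [map_zero, map_sub, RCLike.one_re, RCLike.star_def, RCLike.conj_re] at hre
  linarith

lemma tensorn_mul (n : ℕ) (Q R : Fin n → Matrix (Fin 2) (Fin 2) ℂ) :
    tensorn n Q * tensorn n R = tensorn n (fun j => Q j * R j) := by
  ext x y
  simp only [tensorn, mul_apply, ← Finset.prod_mul_distrib]
  exact (Fintype.prod_sum fun j a => Q j (x j) a * R j a (y j)).symm

lemma tensorn_one (n : ℕ) : tensorn n (fun _ => 1) = 1 := by
  ext x y
  by_cases h : x = y
  · subst h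
    simp [tensorn]
  · obtain ⟨j, hj⟩ := Function.ne_iff.mp h
    simp only [tensorn, one_apply_ne h]
    exact Finset.prod_eq_zero (Finset.mem_univ j) (one_apply_ne hj)

lemma tensorn_conjTranspose (n : ℕ) (Q : Fin n → Matrix (Fin 2) (Fin 2) ℂ) :
    (tensorn n Q)ᴴ = tensorn n (fun j => (Q j)ᴴ) := by
  ext x y
  simp only [tensorn, conjTranspose_apply]
  exact map_prod (starRingEnd ℂ) _ _

lemma tensorn_ite_apply (n : ℕ) (i : Fin n) (A : Matrix (Fin 2) (Fin 2) ℂ) (x y : Fin n → Fin 2) :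
    tensorn n (fun j => if j = i then A else 1) x y =
      A (x i) (y i) * ∏ j ∈ Finset.univ.erase i, (1 : Matrix (Fin 2) (Fin 2) ℂ) (x j) (y j) := by
  rw [tensorn, ← Finset.mul_prod_erase _ _ (Finset.mem_univ i), if_pos rfl]
  exact congrArg _ (Finset.prod_congr rfl fun j hj => by rw [if_neg (Finset.ne_of_mem_erase hj)])

namespace IsSingleQubitPauli

variable {Q : Matrix (Fin 2) (Fin 2) ℂ}

lemma conjTranspose_eq (hQ : IsSingleQubitPauli Q) : Qᴴ = Q := by
  rcases hQ with rfl | rfl | rfl | rfl <;> ext a b <;> fin_cases a <;> fin_cases b <;>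
    simp [PauliX, PauliY, PauliZ]

lemma mul_self (hQ : IsSingleQubitPauli Q) : Q * Q = 1 := by
  rcases hQ with rfl | rfl | rfl | rfl <;> ext a b <;> fin_cases a <;> fin_cases b <;>
    simp [PauliX, PauliY, PauliZ, mul_apply, Fin.sum_univ_two, one_apply]

end IsSingleQubitPauli

lemma Had2_add_pauli_conj {Q : Matrix (Fin 2) (Fin 2) ℂ} (hQ : IsSingleQubitPauli Q)
    (hQ1 : Q ≠ 1) :
    ∃ B, (B = 0 ∨ IsSingleQubitPauli B) ∧ Had2 + Q * Had2 * Q = (Real.sqrt 2 : ℂ) • B := by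
  have hsqrt : ((Real.sqrt 2 : ℂ))⁻¹ * 2 = Real.sqrt 2 := by
    have : (Real.sqrt 2 : ℂ) ≠ 0 := by exact_mod_cast (Real.sqrt_pos.2 two_pos).ne'
    field_simp
    exact_mod_cast (Real.sq_sqrt zero_le_two).symm
  suffices ∃ B, (B = 0 ∨ IsSingleQubitPauli B) ∧
      !![1, 1; 1, -1] + Q * !![1, 1; 1, -1] * Q = (2 : ℂ) • B by
    obtain ⟨B, hB, hsum⟩ := this
    refine ⟨B, hB, ?_⟩
    rw [Had2, Matrix.mul_smul, Matrix.smul_mul, ← smul_add, hsum, smul_smul, hsqrt]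
  rcases hQ with rfl | rfl | rfl | rfl
  · exact absurd rfl hQ1
  · refine ⟨PauliX, Or.inr (Or.inr (Or.inl rfl)), ?_⟩
    ext a b; fin_cases a <;> fin_cases b <;>
      norm_num [PauliX, mul_apply, Fin.sum_univ_two]
  · refine ⟨0, Or.inl rfl, ?_⟩
    ext a b; fin_cases a <;> fin_cases b <;>
      norm_num [PauliY, mul_apply, Fin.sum_univ_two]
  · refine ⟨PauliZ, Or.inr (Or.inr (Or.inr (Or.inr rfl))), ?_⟩
    ext a b; fin_cases a <;> fin_cases b <;>
      norm_num [PauliZ, mul_apply, Fin.sum_univ_two]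

def onQubit (n : ℕ) (i : Fin n) : Matrix (Fin 2) (Fin 2) ℂ →ₗ[ℂ] QMat n where
  toFun A := tensorn n (fun j => if j = i then A else 1)
  map_add' A B := by
    ext x y
    simp only [Matrix.add_apply, tensorn_ite_apply, add_mul]
  map_smul' c A := by
    ext x y
    simp only [Matrix.smul_apply, tensorn_ite_apply, smul_eq_mul, RingHom.id_apply, mul_assoc]

lemma onQubit_apply (n : ℕ) (i : Fin n) (A : Matrix (Fin 2) (Fin 2) ℂ) :
    onQubit n i A = tensorn n (fun j => if j = i then A else 1) := rfl

lemma onQubit_one (n : ℕ) (i : Fin n) : onQubit n i 1 = 1 := by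
  simpa [onQubit_apply] using tensorn_one n

lemma onQubit_mul (n : ℕ) (i : Fin n) (A B : Matrix (Fin 2) (Fin 2) ℂ) :
    onQubit n i A * onQubit n i B = onQubit n i (A * B) := by
  rw [onQubit_apply, onQubit_apply, onQubit_apply, tensorn_mul]
  congr 1
  funext j
  split_ifs <;> simp

lemma onQubit_conjTranspose (n : ℕ) (i : Fin n) (A : Matrix (Fin 2) (Fin 2) ℂ) :
    (onQubit n i A)ᴴ = onQubit n i Aᴴ := by
  rw [onQubit_apply, onQubit_apply, tensorn_conjTranspose]
  congr 1
  funext j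
  split_ifs <;> simp

lemma conjTranspose_tensorn_mul_onQubit_mul_tensorn (n : ℕ) (i : Fin n)
    (Q : Fin n → Matrix (Fin 2) (Fin 2) ℂ) (hQ : ∀ j ≠ i, (Q j)ᴴ * Q j = 1)
    (A : Matrix (Fin 2) (Fin 2) ℂ) :
    (tensorn n Q)ᴴ * onQubit n i A * tensorn n Q = onQubit n i ((Q i)ᴴ * A * Q i) := by
  rw [tensorn_conjTranspose, onQubit_apply, onQubit_apply, tensorn_mul, tensorn_mul]
  congr 1
  funext j
  split_ifs with hj
  · rw [hj]
  · rw [mul_one, hQ j hj]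

def qubitExpectation {n : ℕ} (ψ : QVec n) (i : Fin n) : Matrix (Fin 2) (Fin 2) ℂ →ₗ[ℂ] ℂ where
  toFun A := star ψ ⬝ᵥ (onQubit n i A *ᵥ ψ)
  map_add' A B := by simp only [map_add, add_mulVec, dotProduct_add]
  map_smul' c A := by simp only [map_smul, smul_mulVec, dotProduct_smul, smul_eq_mul,
    RingHom.id_apply]

lemma qubitExpectation_apply {n : ℕ} (ψ : QVec n) (i : Fin n) (A : Matrix (Fin 2) (Fin 2) ℂ) :
    qubitExpectation ψ i A = star ψ ⬝ᵥ (onQubit n i A *ᵥ ψ) := rfl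

lemma qubitExpectation_pauli_conj {n : ℕ} {ψ : QVec n} (i : Fin n) {c : ℂ}
    (hc : c ∈ unitary ℂ) {Q : Fin n → Matrix (Fin 2) (Fin 2) ℂ}
    (hQ : ∀ j, IsSingleQubitPauli (Q j)) (hstab : (c • tensorn n Q) *ᵥ ψ = ψ)
    (A : Matrix (Fin 2) (Fin 2) ℂ) :
    qubitExpectation ψ i (Q i * A * Q i) = qubitExpectation ψ i A := by
  have hconj : (c • tensorn n Q)ᴴ * onQubit n i A * (c • tensorn n Q) =
      onQubit n i (Q i * A * Q i) := by
    rw [conjTranspose_smul, Matrix.smul_mul, Matrix.smul_mul, Matrix.mul_smul, smul_smul,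
      Unitary.star_mul_self_of_mem hc, one_smul,
      conjTranspose_tensorn_mul_onQubit_mul_tensorn n i Q
        (fun j _ => by rw [(hQ j).conjTranspose_eq, (hQ j).mul_self]),
      (hQ i).conjTranspose_eq]
  rw [qubitExpectation_apply, qubitExpectation_apply, ← hconj,
    dotProduct_conjTranspose_mul_mul_mulVec_of_mulVec_eq hstab]

lemma re_qubitExpectation_le_one {n : ℕ} {ψ : QVec n} (hψ : star ψ ⬝ᵥ ψ = 1) (i : Fin n)
    {B : Matrix (Fin 2) (Fin 2) ℂ} (hB : IsSingleQubitPauli B) :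
    (qubitExpectation ψ i B).re ≤ 1 := by
  refine re_dotProduct_mulVec_le_one ?_ hψ
  rw [onQubit_conjTranspose, onQubit_mul, hB.conjTranspose_eq, hB.mul_self, onQubit_one]

lemma qubitExpectation_half_one_sub_HadAt {n : ℕ} {ψ : QVec n} (hψ : star ψ ⬝ᵥ ψ = 1)
    (i : Fin n) :
    star ψ ⬝ᵥ (((2 : ℂ)⁻¹ • (1 - HadAt n i)) *ᵥ ψ) = 2⁻¹ * (1 - qubitExpectation ψ i Had2) := by
  rw [smul_mulVec, sub_mulVec, one_mulVec, dotProduct_smul, dotProduct_sub, hψ, smul_eq_mul]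
  rfl

lemma sin_sq_pi_div_eight : Real.sin (Real.pi / 8) ^ 2 = (1 - Real.sqrt 2 / 2) / 2 := by
  rw [Real.sin_sq_eq_half_sub, show 2 * (Real.pi / 8) = Real.pi / 4 by ring,
    Real.cos_pi_div_four]
  ring

/-- if some element of `stab(ψ)` acts non-trivially on qubit `i`, then
`⟨ψ, ((I - H_i)/2) ψ⟩ ≥ sin²(π/8)`. -/
theorem local_energy_bound_single_qubit (n : ℕ) (ψ : QVec n) (hunit : star ψ ⬝ᵥ ψ = 1)
    (i : Fin n)
    (h : ∃ (ℓ : Fin 4) (Q : Fin n → Matrix (Fin 2) (Fin 2) ℂ),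
      (∀ j, IsSingleQubitPauli (Q j)) ∧
      ((Complex.I ^ (ℓ : ℕ)) • tensorn n Q) *ᵥ ψ = ψ ∧ Q i ≠ 1) :
    Real.sin (Real.pi / 8) ^ 2 ≤
      (star ψ ⬝ᵥ (((2 : ℂ)⁻¹ • (1 - HadAt n i)) *ᵥ ψ)).re := by
  obtain ⟨ℓ, Q, hQ, hstab, hQi⟩ := h
  obtain ⟨B, hB, hHB⟩ := Had2_add_pauli_conj (hQ i) hQi
  set e := qubitExpectation ψ i
  have hphase : Complex.I ^ (ℓ : ℕ) ∈ unitary ℂ :=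
    pow_mem (Unitary.mem_iff_star_mul_self.2 (by simp)) _
  have hHad : 2 * e Had2 = Real.sqrt 2 * e B := by
    rw [two_mul]
    nth_rewrite 2 [← qubitExpectation_pauli_conj i hphase hQ hstab Had2]
    rw [← map_add, hHB, map_smul, smul_eq_mul]
  have hB_le : (e B).re ≤ 1 := by
    rcases hB with rfl | hB
    · simp
    · exact re_qubitExpectation_le_one hunit i hB
  have hre : 2 * (e Had2).re = Real.sqrt 2 * (e B).re := by
    simpa using congrArg Complex.re hHad
  rw [qubitExpectation_half_one_sub_HadAt hunit, sin_sq_pi_div_eight,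
    show (2⁻¹ * (1 - e Had2)).re = (1 - (e Had2).re) / 2 by simp; ring]
  nlinarith [mul_nonneg (Real.sqrt_nonneg 2) (sub_nonneg.2 hB_le)]
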